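/- arXiv:1410.4317 — 4 statements merged into one kernel-verified Lean document; each statement's English description precedes it below -/
import Mathlib

section
/- Along any solution of the static equation, the functional Q(r) = cosh²r · W'(r)² − (ℓ(ℓ+1)/2)·(1 − W(r)²)² satisfies Q'(r) = sinh(2r)·W'(r)²; in particular Q is nondecreasing on [0,∞). -/
/-!
Differentiating `Q` gives `sinh (2r) W'² + 2 W' (cosh²r W'' + ℓ(ℓ+1) W (1 - W²))`, and the
static equation, multiplied by `cosh²r`, says exactly that the bracket vanishes. Since
`sinh (2r) ≥ 0` for `r ≥ 0`, the derivative of `Q` is nonnegative there.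
-/

open Real

lemma hasDerivAt_cosh_sq_mul_deriv_sq_sub (c : ℝ) {W : ℝ → ℝ} {r : ℝ}
    (hW : DifferentiableAt ℝ W r) (hW' : DifferentiableAt ℝ (deriv W) r) :
    HasDerivAt (fun s => cosh s ^ 2 * deriv W s ^ 2 - c / 2 * (1 - W s ^ 2) ^ 2)
      (sinh (2 * r) * deriv W r ^ 2
        + 2 * deriv W r * (cosh r ^ 2 * deriv (deriv W) r + c * W r * (1 - W r ^ 2))) r := by
  have hcosh : HasDerivAt (fun s => cosh s ^ 2) (2 * cosh r ^ 1 * sinh r) r :=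
    (hasDerivAt_cosh r).pow 2
  have hW'sq : HasDerivAt (fun s => deriv W s ^ 2)
      (2 * deriv W r ^ 1 * deriv (deriv W) r) r :=
    hW'.hasDerivAt.pow 2
  have hpot : HasDerivAt (fun s => c / 2 * (1 - W s ^ 2) ^ 2)
      (c / 2 * (2 * (1 - W r ^ 2) ^ 1 * (0 - 2 * W r ^ 1 * deriv W r))) r :=
    (((hasDerivAt_const r 1).sub (hW.hasDerivAt.pow 2)).pow 2).const_mul (c / 2)
  refine ((hcosh.mul hW'sq).sub hpot).congr_deriv ?_
  rw [sinh_two_mul]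
  ring

theorem Q_monotone_general (ℓ : ℝ) (W : ℝ → ℝ)
    (hW : ContDiff ℝ 2 W)
    (hODE : ∀ r : ℝ, deriv (deriv W) r
      + ℓ * (ℓ + 1) / (Real.cosh r) ^ 2 * W r * (1 - (W r) ^ 2) = 0)
    (Q : ℝ → ℝ)
    (hQ : ∀ r : ℝ, Q r = (Real.cosh r) ^ 2 * (deriv W r) ^ 2
      - ℓ * (ℓ + 1) / 2 * (1 - (W r) ^ 2) ^ 2) :
    (∀ r : ℝ, deriv Q r = Real.sinh (2 * r) * (deriv W r) ^ 2)
      ∧ MonotoneOn Q (Set.Ici (0 : ℝ)) := by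
  have hQ' : ∀ r, HasDerivAt Q (sinh (2 * r) * deriv W r ^ 2) r := by
    intro r
    have hstatic : cosh r ^ 2 * deriv (deriv W) r + ℓ * (ℓ + 1) * W r * (1 - W r ^ 2) = 0 := by
      have := congrArg (cosh r ^ 2 * ·) (hODE r)
      field_simp at this
      linarith
    have hderiv := hasDerivAt_cosh_sq_mul_deriv_sq_sub (ℓ * (ℓ + 1))
      (hW.differentiable two_ne_zero r) (hW.differentiable_deriv_two r)
    rw [hstatic, mul_zero, add_zero] at hderiv
    exact (funext hQ) ▸ hderiv
  refine ⟨fun r => (hQ' r).deriv, ?_⟩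
  refine monotoneOn_of_hasDerivWithinAt_nonneg (convex_Ici 0)
    (fun r _ => (hQ' r).continuousAt.continuousWithinAt)
    (fun r _ => (hQ' r).hasDerivWithinAt) fun r hr => ?_
  rw [interior_Ici, Set.mem_Ioi] at hr
  have : 0 ≤ sinh (2 * r) := sinh_nonneg_iff.mpr (by positivity)
  positivity

/-- Along any solution of the static equation, the functional
`Q(r) = cosh²r · W'(r)² − (ℓ(ℓ+1)/2)(1 − W(r)²)²` satisfies
`Q'(r) = sinh(2r) W'(r)²`; in particular `Q` is nondecreasing on `[0,∞)`. -/
theorem Q_monotone (ℓ : ℝ) (hℓ : 0 < ℓ) (W : ℝ → ℝ)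
    (hW : ContDiff ℝ 2 W)
    (hODE : ∀ r : ℝ, deriv (deriv W) r
      + ℓ * (ℓ + 1) / (Real.cosh r) ^ 2 * W r * (1 - (W r) ^ 2) = 0)
    (Q : ℝ → ℝ)
    (hQ : ∀ r : ℝ, Q r = (Real.cosh r) ^ 2 * (deriv W r) ^ 2
      - ℓ * (ℓ + 1) / 2 * (1 - (W r) ^ 2) ^ 2) :
    (∀ r : ℝ, deriv Q r = Real.sinh (2 * r) * (deriv W r) ^ 2)
      ∧ MonotoneOn Q (Set.Ici (0 : ℝ)) :=
  Q_monotone_general ℓ W hW hODE Q hQ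
end

section
/- If W is a solution of the static equation with |W(r)| < 1 for all r ≥ 0 and Q(r₀) > 0 for some r₀ ≥ 0, then there exists r₁ > r₀ with |W(r₁)| = 1, giving a contradiction; hence any solution staying in the strip |W| < 1 for all r ≥ 0 satisfies Q(r) ≤ 0 for all r ≥ 0. -/
/-!
Dividing `Q` by `cosh² r` gives `E = W'² - (ℓ(ℓ+1)/2)(1 - W²)²/cosh² r`, whose derivative along
solutions is `ℓ(ℓ+1) sinh r (1 - W²)²/cosh³ r ≥ 0`. If `Q(r₀) > 0` then `W'² ≥ E ≥ E(r₀) > 0`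
on `[r₀, ∞)`, so by Darboux `W'` keeps one sign there and `W` moves linearly, leaving the strip.
-/

open Real Set

theorem mul_sub_le_abs_sub_of_sq_le_deriv {f : ℝ → ℝ} (hf : Differentiable ℝ f) {a b c : ℝ}
    (hc : 0 < c) (hf' : ∀ x ∈ Icc a b, c ≤ deriv f x ^ 2) (hab : a ≤ b) :
    √c * (b - a) ≤ |f b - f a| := by
  have habs : ∀ x ∈ Icc a b, √c ≤ |deriv f x| := fun x hx =>
    sqrt_sq_eq_abs (deriv f x) ▸ sqrt_le_sqrt (hf' x hx)
  have hne : ∀ x ∈ Icc a b, deriv f x ≠ 0 := fun x hx h0 => by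
    have := habs x hx
    rw [h0, abs_zero] at this
    exact (sqrt_pos.2 hc).not_ge this
  have hcont := hf.continuous.continuousOn (s := Icc a b)
  have hdiff := hf.differentiableOn (s := interior (Icc a b))
  have hmem : a ∈ Icc a b ∧ b ∈ Icc a b := ⟨left_mem_Icc.2 hab, right_mem_Icc.2 hab⟩
  rcases hasDerivWithinAt_forall_lt_or_forall_gt_of_forall_ne (convex_Icc a b)
    (fun x _ => (hf x).hasDerivAt.hasDerivWithinAt) hne with hneg | hpos
  · have hle : ∀ x ∈ interior (Icc a b), deriv f x ≤ -√c := fun x hx => by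
      have hx' := interior_subset hx
      linarith [abs_of_neg (hneg x hx'), habs x hx']
    have := (convex_Icc a b).image_sub_le_mul_sub_of_deriv_le hcont hdiff hle a hmem.1 b hmem.2 hab
    linarith [neg_abs_le (f b - f a)]
  · have hge : ∀ x ∈ interior (Icc a b), √c ≤ deriv f x := fun x hx => by
      have hx' := interior_subset hx
      linarith [abs_of_pos (hpos x hx'), habs x hx']
    have := (convex_Icc a b).mul_sub_le_image_sub_of_le_deriv hcont hdiff hge a hmem.1 b hmem.2 hab
    linarith [le_abs_self (f b - f a)]

/-- With `a = ℓ(ℓ+1)` this is `Q r / cosh² r`. -/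
noncomputable def staticEnergy (a : ℝ) (W : ℝ → ℝ) (r : ℝ) : ℝ :=
  deriv W r ^ 2 - a / 2 * (1 - W r ^ 2) ^ 2 / cosh r ^ 2

section

variable {a : ℝ} {W : ℝ → ℝ}

theorem cosh_sq_mul_staticEnergy (r : ℝ) :
    cosh r ^ 2 * staticEnergy a W r = cosh r ^ 2 * deriv W r ^ 2 - a / 2 * (1 - W r ^ 2) ^ 2 := by
  have := (cosh_pos r).ne'
  unfold staticEnergy
  field_simp

theorem staticEnergy_le_sq_deriv (ha : 0 ≤ a) (r : ℝ) : staticEnergy a W r ≤ deriv W r ^ 2 := by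
  unfold staticEnergy
  have : 0 ≤ a / 2 * (1 - W r ^ 2) ^ 2 / cosh r ^ 2 := by positivity
  linarith

theorem hasDerivAt_staticEnergy (hW : Differentiable ℝ W) (hW' : Differentiable ℝ (deriv W))
    (hODE : ∀ r, deriv (deriv W) r + a / cosh r ^ 2 * W r * (1 - W r ^ 2) = 0) (r : ℝ) :
    HasDerivAt (staticEnergy a W) (a * sinh r * (1 - W r ^ 2) ^ 2 / cosh r ^ 3) r := by
  have hW'' : deriv (deriv W) r = -(a / cosh r ^ 2 * W r * (1 - W r ^ 2)) :=
    eq_neg_of_add_eq_zero_left (hODE r)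
  have hcosh : cosh r ≠ 0 := (cosh_pos r).ne'
  have h := ((hW' r).hasDerivAt.pow 2).sub
    ((((hasDerivAt_const r 1).sub ((hW r).hasDerivAt.pow 2)).pow 2).const_mul (a / 2) |>.div
      ((hasDerivAt_cosh r).pow 2) (pow_ne_zero 2 hcosh))
  refine h.congr_deriv ?_
  simp only [Pi.pow_apply, Pi.sub_apply, hW'']
  field_simp
  ring

theorem monotoneOn_staticEnergy (ha : 0 ≤ a) (hW : Differentiable ℝ W)
    (hW' : Differentiable ℝ (deriv W))
    (hODE : ∀ r, deriv (deriv W) r + a / cosh r ^ 2 * W r * (1 - W r ^ 2) = 0) :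
    MonotoneOn (staticEnergy a W) (Ici 0) := by
  have hE := hasDerivAt_staticEnergy hW hW' hODE
  refine monotoneOn_of_hasDerivWithinAt_nonneg (convex_Ici 0)
    (fun r _ => (hE r).continuousAt.continuousWithinAt)
    (fun r _ => (hE r).hasDerivWithinAt) fun r hr => ?_
  rw [interior_Ici] at hr
  have := sinh_pos_iff.2 hr
  positivity

end

/-- A solution of the static equation staying in the strip `|W| < 1` for all
`r ≥ 0` satisfies `Q(r) ≤ 0` for all `r ≥ 0`; indeed if `Q(r₀) > 0` at some
`r₀ ≥ 0` then `|W(r₁)| = 1` at some `r₁ > r₀`, a contradiction. -/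
theorem Q_nonpos_in_strip (ℓ : ℝ) (hℓ : 0 < ℓ) (W : ℝ → ℝ)
    (hW : ContDiff ℝ 2 W)
    (hODE : ∀ r : ℝ, deriv (deriv W) r
      + ℓ * (ℓ + 1) / (Real.cosh r) ^ 2 * W r * (1 - (W r) ^ 2) = 0)
    (Q : ℝ → ℝ)
    (hQ : ∀ r : ℝ, Q r = (Real.cosh r) ^ 2 * (deriv W r) ^ 2
      - ℓ * (ℓ + 1) / 2 * (1 - (W r) ^ 2) ^ 2)
    (hstrip : ∀ r : ℝ, 0 ≤ r → |W r| < 1) :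
    (∀ r₀ : ℝ, 0 ≤ r₀ → 0 < Q r₀ → ∃ r₁ : ℝ, r₀ < r₁ ∧ |W r₁| = 1)
      ∧ (∀ r : ℝ, 0 ≤ r → Q r ≤ 0) := by
  have ha : 0 ≤ ℓ * (ℓ + 1) := by positivity
  have hWd : Differentiable ℝ W := hW.differentiable two_ne_zero
  have hmono := monotoneOn_staticEnergy ha hWd hW.differentiable_deriv_two hODE
  have not_pos : ∀ r₀, 0 ≤ r₀ → ¬ 0 < Q r₀ := by
    intro r₀ hr₀ hQ₀
    set c := staticEnergy (ℓ * (ℓ + 1)) W r₀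
    have hc : 0 < c := by
      rw [hQ, ← cosh_sq_mul_staticEnergy] at hQ₀
      exact pos_of_mul_pos_right hQ₀ (sq_nonneg _)
    set r₁ := r₀ + 2 / √c
    have hr₀₁ : r₀ ≤ r₁ := le_add_of_nonneg_right (by positivity)
    have hgrow := mul_sub_le_abs_sub_of_sq_le_deriv hWd hc (fun x hx =>
      (hmono (mem_Ici.2 hr₀) (mem_Ici.2 (hr₀.trans hx.1)) hx.1).trans
        (staticEnergy_le_sq_deriv ha x)) hr₀₁
    have hdist : √c * (r₁ - r₀) = 2 := by
      rw [add_sub_cancel_left, mul_div_cancel₀ _ (sqrt_pos.2 hc).ne']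
    have h₀ := abs_lt.1 (hstrip r₀ hr₀)
    have h₁ := abs_lt.1 (hstrip r₁ (hr₀.trans hr₀₁))
    rw [hdist] at hgrow
    cases abs_cases (W r₁ - W r₀) <;> linarith
  exact ⟨fun r₀ hr₀ hQ₀ => (not_pos r₀ hr₀ hQ₀).elim, fun r hr => not_lt.1 (not_pos r hr)⟩
end

section
/- For an odd solution of the static equation staying in |W| < 1 for all r, the initial slope b = W'(0) satisfies 2b² < ℓ(ℓ+1). -/
/-!
Along a solution, `E = W'² - (ℓ(ℓ+1)/2)(1 - W²)² / cosh² r` has derivative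
`ℓ(ℓ+1)(1 - W²)² sinh r / cosh³ r`, which is positive for `r > 0` while `|W| < 1`.
If `2b² ≥ ℓ(ℓ+1)`, then `E 0 ≥ 0`, so `E 1 > 0` and `W' ≥ √(E 1)` on `[1, ∞)` (the sign of `W'`
cannot change, since `W'² ≥ E > 0`). Then `W` grows linearly and leaves the strip.
-/

open Set Filter Real

theorem IsPreconnected.lt_of_forall_ne {X α : Type*} [TopologicalSpace X] [LinearOrder α]
    [TopologicalSpace α] [OrderClosedTopology α] {s : Set X} (hs : IsPreconnected s)
    {f : X → α} (hf : ContinuousOn f s) {c : α} (hne : ∀ x ∈ s, f x ≠ c) {a : X} (ha : a ∈ s)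
    (hfa : c < f a) {x : X} (hx : x ∈ s) : c < f x := by
  by_contra! hfx
  obtain ⟨y, hy, hyc⟩ := hs.intermediate_value hx ha hf ⟨hfx, hfa.le⟩
  exact hne y hy hyc

theorem tendsto_atTop_of_le_deriv {f : ℝ → ℝ} (hf : Differentiable ℝ f) {a ε : ℝ} (hε : 0 < ε)
    (hf' : ∀ x ≥ a, ε ≤ deriv f x) : Tendsto f atTop atTop := by
  have hlin : Tendsto (fun x => f a + ε * (x - a)) atTop atTop :=
    tendsto_atTop_add_const_left _ _
      ((tendsto_atTop_add_const_right _ _ tendsto_id).const_mul_atTop hε)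
  refine tendsto_atTop_mono' _ ?_ hlin
  filter_upwards [eventually_ge_atTop a] with x hx
  have := convex_Ici a |>.mul_sub_le_image_sub_of_le_deriv hf.continuous.continuousOn
    (hf.differentiableOn.mono (subset_univ _)) (fun y hy => hf' y (interior_subset hy))
    a self_mem_Ici x hx hx
  linarith

/-- The paper's `Q r / cosh² r`: unlike `Q`, it bounds `W'²` from below. -/
noncomputable def slopeEnergy (k : ℝ) (W : ℝ → ℝ) (r : ℝ) : ℝ :=
  deriv W r ^ 2 - k / 2 * (1 - W r ^ 2) ^ 2 / cosh r ^ 2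

section
variable {k : ℝ} {W : ℝ → ℝ}

theorem slopeEnergy_le_deriv_sq (hk : 0 ≤ k) (r : ℝ) : slopeEnergy k W r ≤ deriv W r ^ 2 := by
  unfold slopeEnergy
  have : 0 ≤ k / 2 * (1 - W r ^ 2) ^ 2 / cosh r ^ 2 := by positivity
  linarith

theorem hasDerivAt_slopeEnergy {r : ℝ} (hW : DifferentiableAt ℝ W r)
    (hW' : DifferentiableAt ℝ (deriv W) r)
    (hODE : deriv (deriv W) r + k / cosh r ^ 2 * W r * (1 - W r ^ 2) = 0) :
    HasDerivAt (slopeEnergy k W) (k * (1 - W r ^ 2) ^ 2 * sinh r / cosh r ^ 3) r := by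
  have hpot := ((((hW.hasDerivAt.fun_pow 2).const_sub 1).fun_pow 2).const_mul (k / 2)).fun_div
    ((hasDerivAt_cosh r).fun_pow 2) (by positivity)
  refine ((hW'.hasDerivAt.fun_pow 2).fun_sub hpot).congr_deriv ?_
  rw [eq_neg_of_add_eq_zero_left hODE]
  field_simp
  ring

theorem strictMonoOn_slopeEnergy (hk : 0 < k) (hW : Differentiable ℝ W)
    (hW' : Differentiable ℝ (deriv W))
    (hODE : ∀ r, deriv (deriv W) r + k / cosh r ^ 2 * W r * (1 - W r ^ 2) = 0)
    (hstrip : ∀ r, 0 ≤ r → |W r| < 1) : StrictMonoOn (slopeEnergy k W) (Ici 0) := by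
  have hE r := hasDerivAt_slopeEnergy (hW r) (hW' r) (hODE r)
  refine strictMonoOn_of_deriv_pos (convex_Ici 0)
    (fun r _ => (hE r).continuousAt.continuousWithinAt) fun r hr => ?_
  rw [interior_Ici] at hr
  have hW_sq : 0 < 1 - W r ^ 2 := sub_pos.2 <| (sq_lt_one_iff_abs_lt_one _).2 (hstrip r hr.le)
  rw [(hE r).deriv]
  have := sinh_pos_iff.2 hr
  positivity

end

/-- For an odd solution of the static equation staying in `|W| < 1` for all
`r ≥ 0`, the initial slope `b = W'(0)` satisfies `2b² < ℓ(ℓ+1)`. -/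
theorem slope_bound (ℓ : ℝ) (hℓ : 0 < ℓ) (W : ℝ → ℝ)
    (hW : ContDiff ℝ 2 W)
    (hODE : ∀ r : ℝ, deriv (deriv W) r
      + ℓ * (ℓ + 1) / (Real.cosh r) ^ 2 * W r * (1 - (W r) ^ 2) = 0)
    (b : ℝ) (hb : 0 < b) (hW0 : W 0 = 0) (hW0' : deriv W 0 = b)
    (hstrip : ∀ r : ℝ, 0 ≤ r → |W r| < 1) :
    2 * b ^ 2 < ℓ * (ℓ + 1) := by
  by_contra! hb_large
  have hk : 0 < ℓ * (ℓ + 1) := by positivity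
  have hW1 : Differentiable ℝ W := hW.differentiable two_ne_zero
  have hW' : Differentiable ℝ (deriv W) := hW.differentiable_deriv_two
  set E := slopeEnergy (ℓ * (ℓ + 1)) W
  have hmono : StrictMonoOn E (Ici 0) := strictMonoOn_slopeEnergy hk hW1 hW' hODE hstrip
  have hE0 : 0 ≤ E 0 := by
    simp only [E, slopeEnergy, hW0, hW0', cosh_zero]
    linarith
  have hE_pos {r : ℝ} (hr : 0 < r) : 0 < E r := hE0.trans_lt (hmono self_mem_Ici hr.le hr)
  have hderiv_pos : ∀ r ∈ Ici (0 : ℝ), 0 < deriv W r := by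
    refine fun r hr => isPreconnected_Ici.lt_of_forall_ne hW'.continuous.continuousOn
      (fun s hs hs0 => ?_) self_mem_Ici (hW0' ▸ hb) hr
    rcases (mem_Ici.1 hs).eq_or_lt with rfl | hs
    · linarith
    · have := slopeEnergy_le_deriv_sq hk.le (W := W) s
      rw [hs0] at this
      linarith [hE_pos hs]
  have hslope : ∀ r ≥ 1, √(E 1) ≤ deriv W r := fun r hr => by
    have hr0 : (0 : ℝ) ≤ r := zero_le_one.trans hr
    rw [sqrt_le_left (hderiv_pos r hr0).le]
    exact (hmono.monotoneOn (mem_Ici.2 zero_le_one) (mem_Ici.2 hr0) hr).trans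
      (slopeEnergy_le_deriv_sq hk.le r)
  have hW_unbounded : Tendsto W atTop atTop :=
    tendsto_atTop_of_le_deriv hW1 (sqrt_pos.2 (hE_pos one_pos)) hslope
  obtain ⟨r, hr1, hr⟩ := ((hW_unbounded.eventually_ge_atTop 1).and (eventually_ge_atTop 0)).exists
  linarith [abs_lt.1 (hstrip r hr)]
end

section
/- Any solution of the static equation with |W(r)| < 1 for all r ≥ 0 satisfies lim_{r→∞} e^r W'(r) = 0, and the limit W_∞ = lim_{r→∞} W(r) exists. -/
open Filter Real MeasureTheory Set Topology

/-!
In the strip `|W| < 1` the equation gives `|W''(r)| ≤ ℓ(ℓ+1) / cosh² r ≤ 4ℓ(ℓ+1) e^{-2r}`,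
so `W''` is integrable on `[0, ∞)` and `W'` has a limit at infinity. That limit is `0`, since
a nonzero one would make `W` unbounded. Integrating `W''` over `[r, ∞)` then gives
`|W'(r)| ≤ 2ℓ(ℓ+1) e^{-2r}`, which yields both `e^r W'(r) → 0` and the integrability of `W'`,
hence the existence of `W_∞`.
-/

section ExponentialDecay

variable {f f' : ℝ → ℝ} {a b c C : ℝ}

theorem integrableOn_Ioi_of_abs_le_mul_exp (hc : 0 < c) (hf : ContinuousOn f (Ici a))
    (hbd : ∀ x ∈ Ici a, |f x| ≤ C * exp (-c * x)) : IntegrableOn f (Ioi a) := by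
  refine integrable_of_isBigO_exp_neg hc hf (Asymptotics.IsBigO.of_bound C ?_)
  filter_upwards [eventually_ge_atTop a] with x hx
  simpa [abs_of_pos (exp_pos _)] using hbd x hx

theorem tendsto_exp_mul_of_abs_le_mul_exp {g : ℝ → ℝ} (hbc : b < c)
    (hbd : ∀ x ∈ Ici a, |g x| ≤ C * exp (-c * x)) :
    Tendsto (fun x => exp (b * x) * g x) atTop (𝓝 0) := by
  have hdecay : Tendsto (fun x => C * exp ((b - c) * x)) atTop (𝓝 0) := by
    simpa using (tendsto_exp_atBot.comp
      (tendsto_id.const_mul_atTop_of_neg (sub_neg.mpr hbc))).const_mul C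
  refine squeeze_zero_norm' ?_ hdecay
  filter_upwards [eventually_ge_atTop a] with x hx
  calc ‖exp (b * x) * g x‖ = exp (b * x) * |g x| := by
        rw [norm_mul, norm_of_nonneg (exp_pos _).le, norm_eq_abs]
    _ ≤ exp (b * x) * (C * exp (-c * x)) := by gcongr; exact hbd x hx
    _ = C * exp ((b - c) * x) := by rw [mul_left_comm, ← exp_add]; ring_nf

theorem abs_le_of_tendsto_zero_of_abs_deriv_le (hc : 0 < c)
    (hf : ∀ x ∈ Ici a, HasDerivAt f (f' x) x) (hf' : ContinuousOn f' (Ici a))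
    (hlim : Tendsto f atTop (𝓝 0)) (hbd : ∀ x ∈ Ici a, |f' x| ≤ C * exp (-c * x)) :
    |f a| ≤ C / c * exp (-c * a) := by
  have hint := integrableOn_Ioi_of_abs_le_mul_exp hc hf' hbd
  have hfa : f a = -∫ x in Ioi a, f' x := by
    rw [integral_Ioi_of_hasDerivAt_of_tendsto' hf hint hlim]; ring
  calc |f a| = ‖∫ x in Ioi a, f' x‖ := by rw [hfa, abs_neg, norm_eq_abs]
    _ ≤ ∫ x in Ioi a, C * exp (-c * x) := by
        refine norm_integral_le_of_norm_le ((exp_neg_integrableOn_Ioi a hc).const_mul C) ?_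
        filter_upwards [ae_restrict_mem measurableSet_Ioi] with x hx
        exact hbd x (mem_Ici_of_Ioi hx)
    _ = C / c * exp (-c * a) := by
        rw [integral_const_mul, integral_exp_mul_Ioi (neg_neg_of_pos hc)]
        field_simp

end ExponentialDecay

section BoundedFunction

variable {f : ℝ → ℝ} {a M m : ℝ}

theorem nonpos_of_tendsto_deriv_of_le (hf : Differentiable ℝ f)
    (hbdd : ∀ x ∈ Ici a, f x ≤ M) (hm : Tendsto (deriv f) atTop (𝓝 m)) : m ≤ 0 := by
  by_contra! hpos
  obtain ⟨R, hRa, hR⟩ : ∃ R ≥ a, ∀ x ∈ Ici R, m / 2 ≤ deriv f x := by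
    obtain ⟨R, hR⟩ :=
      eventually_atTop.mp (hm.eventually (eventually_ge_nhds (half_lt_self hpos)))
    exact ⟨max R a, le_max_right _ _, fun x hx => hR x (le_of_max_le_left hx)⟩
  have hgrowth : ∀ y ∈ Ici R, m / 2 * (y - R) ≤ f y - f R :=
    fun y hy => (convex_Ici R).mul_sub_le_image_sub_of_le_deriv hf.continuous.continuousOn
      hf.differentiableOn (fun x hx => hR x (interior_subset hx)) R self_mem_Ici y hy hy
  have hunbdd : Tendsto (fun y => m / 2 * (y - R)) atTop atTop :=
    (tendsto_atTop_add_const_right _ _ tendsto_id).const_mul_atTop (half_pos hpos)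
  obtain ⟨y, hyR, hy⟩ :=
    ((eventually_ge_atTop R).and (hunbdd.eventually_gt_atTop (M - f R))).exists
  linarith [hgrowth y hyR, hbdd y (le_trans hRa hyR)]

theorem eq_zero_of_tendsto_deriv_of_abs_le (hf : Differentiable ℝ f)
    (hbdd : ∀ x ∈ Ici a, |f x| ≤ M) (hm : Tendsto (deriv f) atTop (𝓝 m)) : m = 0 := by
  have hup := nonpos_of_tendsto_deriv_of_le hf (fun x hx => (abs_le.mp (hbdd x hx)).2) hm
  have hdown : -m ≤ 0 := by
    refine nonpos_of_tendsto_deriv_of_le hf.neg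
      (fun x hx => neg_le.mpr (neg_le_of_abs_le (hbdd x hx))) (by rw [deriv.neg']; exact hm.neg)
  linarith

end BoundedFunction

theorem inv_cosh_sq_le (x : ℝ) : (cosh x ^ 2)⁻¹ ≤ 4 * exp (-2 * x) := by
  have hcosh : exp x / 2 ≤ cosh x := by rw [cosh_eq]; linarith [exp_pos (-x)]
  have hsq : exp (2 * x) / 4 ≤ cosh x ^ 2 := by
    rw [show 2 * x = x + x by ring, exp_add]; nlinarith [exp_pos x]
  calc (cosh x ^ 2)⁻¹ ≤ (exp (2 * x) / 4)⁻¹ := inv_anti₀ (by positivity) hsq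
    _ = 4 * exp (-2 * x) := by rw [inv_div, div_eq_mul_inv, ← exp_neg]; ring_nf

theorem abs_mul_one_sub_sq_le_one {w : ℝ} (hw : |w| ≤ 1) : |w * (1 - w ^ 2)| ≤ 1 := by
  have hsq : w ^ 2 ≤ 1 := by nlinarith [sq_abs w, abs_nonneg w]
  rw [abs_mul, abs_of_nonneg (sub_nonneg.mpr hsq)]
  nlinarith [abs_nonneg w, sq_nonneg w]

theorem abs_div_cosh_sq_mul_mul_one_sub_sq_le (K : ℝ) {r w : ℝ} (hw : |w| ≤ 1) :
    |K / cosh r ^ 2 * w * (1 - w ^ 2)| ≤ 4 * |K| * exp (-2 * r) :=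
  calc |K / cosh r ^ 2 * w * (1 - w ^ 2)| = |K| * (cosh r ^ 2)⁻¹ * |w * (1 - w ^ 2)| := by
        rw [mul_assoc, abs_mul, abs_div, abs_of_pos (by positivity : 0 < cosh r ^ 2),
          div_eq_mul_inv]
    _ ≤ |K| * (4 * exp (-2 * r)) * 1 := by
        gcongr
        · exact inv_cosh_sq_le r
        · exact abs_mul_one_sub_sq_le_one hw
    _ = 4 * |K| * exp (-2 * r) := by ring

theorem asymptotics_in_strip_general (ℓ : ℝ) (W : ℝ → ℝ)
    (hW : ContDiff ℝ 2 W)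
    (hODE : ∀ r : ℝ, deriv (deriv W) r
      + ℓ * (ℓ + 1) / (Real.cosh r) ^ 2 * W r * (1 - (W r) ^ 2) = 0)
    (hstrip : ∀ r : ℝ, 0 ≤ r → |W r| < 1) :
    Tendsto (fun r : ℝ => Real.exp r * deriv W r) atTop (nhds 0)
      ∧ ∃ Winf : ℝ, Tendsto W atTop (nhds Winf) := by
  have hdW : Differentiable ℝ W := hW.differentiable two_ne_zero
  have hW' : ContDiff ℝ 1 (deriv W) := hW.deriv'
  have hddW : Differentiable ℝ (deriv W) := hW'.differentiable one_ne_zero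
  have hW''_bd : ∀ r ∈ Ici 0, |deriv (deriv W) r| ≤ 4 * |ℓ * (ℓ + 1)| * exp (-2 * r) :=
    fun r hr => by
      rw [eq_neg_of_add_eq_zero_left (hODE r), abs_neg]
      exact abs_div_cosh_sq_mul_mul_one_sub_sq_le _ (hstrip r hr).le
  obtain ⟨m, hm⟩ : ∃ m, Tendsto (deriv W) atTop (𝓝 m) :=
    ⟨_, tendsto_limUnder_of_hasDerivAt_of_integrableOn_Ioi (fun x _ => (hddW x).hasDerivAt)
      (integrableOn_Ioi_of_abs_le_mul_exp two_pos
        (hW'.continuous_deriv le_rfl).continuousOn hW''_bd)⟩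
  obtain rfl : m = 0 :=
    eq_zero_of_tendsto_deriv_of_abs_le hdW (fun x hx => (hstrip x hx).le) hm
  have hW'_bd : ∀ r ∈ Ici 0, |deriv W r| ≤ 4 * |ℓ * (ℓ + 1)| / 2 * exp (-2 * r) :=
    fun r hr => abs_le_of_tendsto_zero_of_abs_deriv_le two_pos (fun x _ => (hddW x).hasDerivAt)
      (hW'.continuous_deriv le_rfl).continuousOn hm
      (fun x hx => hW''_bd x (Ici_subset_Ici.mpr hr hx))
  refine ⟨by simpa using tendsto_exp_mul_of_abs_le_mul_exp (b := 1) one_lt_two hW'_bd, ?_⟩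
  exact ⟨_, tendsto_limUnder_of_hasDerivAt_of_integrableOn_Ioi (fun x _ => (hdW x).hasDerivAt)
    (integrableOn_Ioi_of_abs_le_mul_exp two_pos hW'.continuous.continuousOn hW'_bd)⟩

/-- Any solution of the static equation with `|W(r)| < 1` for all `r ≥ 0`
satisfies `lim_{r→∞} e^r W'(r) = 0`, and the limit `W_∞ = lim_{r→∞} W(r)`
exists. -/
theorem asymptotics_in_strip (ℓ : ℝ) (hℓ : 0 < ℓ) (W : ℝ → ℝ)
    (hW : ContDiff ℝ 2 W)
    (hODE : ∀ r : ℝ, deriv (deriv W) r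
      + ℓ * (ℓ + 1) / (Real.cosh r) ^ 2 * W r * (1 - (W r) ^ 2) = 0)
    (hstrip : ∀ r : ℝ, 0 ≤ r → |W r| < 1) :
    Tendsto (fun r : ℝ => Real.exp r * deriv W r) atTop (nhds 0)
      ∧ ∃ Winf : ℝ, Tendsto W atTop (nhds Winf) :=
  asymptotics_in_strip_general ℓ W hW hODE hstrip
end
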